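/- For every odd integer j = 2t+1 ≥ 5, F_t^4 ≡ F_{t+1}^4 (mod F_j), and more generally the sequence (F_i^4 mod F_j) is periodic with period j. -/
import Mathlib

lemma cassini_int : ∀ n : ℕ, (Nat.fib n : ℤ) * Nat.fib (n + 2) - (Nat.fib (n + 1) : ℤ) ^ 2 = (-1) ^ (n + 1) := by
  intro n
  induction n with
  | zero => simp
  | succ k ih =>
    have h : (Nat.fib (k + 3) : ℤ) = Nat.fib (k + 1) + Nat.fib (k + 2) := by
      exact_mod_cast Nat.fib_add_two (n := k + 1)
    have hk : (Nat.fib (k + 2) : ℤ) = Nat.fib k + Nat.fib (k + 1) := by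
      exact_mod_cast Nat.fib_add_two (n := k)
    rw [show k + 1 + 2 = k + 3 from rfl, show k + 1 + 1 = k + 2 from rfl, h,
      pow_succ (-1 : ℤ) (k + 1)]
    linear_combination -ih - (Nat.fib (k + 2) : ℤ) * hk

theorem fib_fourth_power_period (j t : ℕ) (hj : 5 ≤ j) (ht : j = 2 * t + 1) :
    (Nat.fib t) ^ 4 ≡ (Nat.fib (t + 1)) ^ 4 [MOD Nat.fib j] ∧
    ∀ i : ℕ, Nat.fib (i + j) ^ 4 ≡ Nat.fib i ^ 4 [MOD Nat.fib j] := by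
  have hjfib : (Nat.fib j : ℤ) = (Nat.fib (t + 1) : ℤ) ^ 2 + (Nat.fib t : ℤ) ^ 2 := by
    rw [ht]; exact_mod_cast Nat.fib_two_mul_add_one t
  -- F_{j+1}^2 ≡ -1 mod F_j
  have hA : ((Nat.fib (j + 1) : ℤ)) ^ 2 ≡ -1 [ZMOD (Nat.fib j : ℤ)] := by
    rw [Int.modEq_iff_dvd]
    have hcas := cassini_int (2 * t)
    have hjp1 : (Nat.fib (j + 1) : ℤ) = Nat.fib (2 * t) + Nat.fib j := by
      rw [ht]; exact_mod_cast Nat.fib_add_two (n := 2 * t)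
    have h2 : (Nat.fib (2 * t + 2) : ℤ) = Nat.fib (j + 1) := by rw [ht]
    have h1 : (Nat.fib (2 * t + 1) : ℤ) = Nat.fib j := by rw [ht]
    have hodd : ((-1 : ℤ)) ^ (2 * t + 1) = -1 := by
      rw [pow_succ, pow_mul]; norm_num
    refine ⟨-(Nat.fib (j + 1) : ℤ) - Nat.fib j, ?_⟩
    rw [hodd, h1, h2] at hcas
    nlinarith [hcas, hjp1]
  have hA4 : ((Nat.fib (j + 1) : ℤ)) ^ 4 ≡ 1 [ZMOD (Nat.fib j : ℤ)] := by
    have := hA.mul hA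
    have h4 : ((Nat.fib (j + 1) : ℤ)) ^ 2 * (Nat.fib (j + 1) : ℤ) ^ 2 = (Nat.fib (j + 1) : ℤ) ^ 4 := by ring
    rw [h4] at this
    simpa using this
  constructor
  · rw [← Int.natCast_modEq_iff]
    push_cast
    rw [Int.modEq_iff_dvd]
    exact ⟨(Nat.fib (t + 1) : ℤ) ^ 2 - (Nat.fib t : ℤ) ^ 2, by rw [hjfib]; ring⟩
  · intro i
    rw [← Int.natCast_modEq_iff]
    push_cast
    match i with
    | 0 =>
      simp only [Nat.fib_zero, Nat.zero_add, Nat.cast_zero]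
      norm_num
      exact (Int.modEq_iff_dvd.mpr (by simpa using dvd_pow_self ((Nat.fib j : ℤ)) (n := 4) (by norm_num))).symm
    | k + 1 =>
      have hadd : (Nat.fib (k + 1 + j) : ℤ) = Nat.fib k * Nat.fib j + Nat.fib (k + 1) * Nat.fib (j + 1) := by
        have := Nat.fib_add k j
        rw [show k + 1 + j = k + j + 1 by omega]
        exact_mod_cast this
      have step : (Nat.fib (k + 1 + j) : ℤ) ≡ Nat.fib (k + 1) * Nat.fib (j + 1) [ZMOD (Nat.fib j : ℤ)] := by
        rw [hadd, Int.modEq_iff_dvd]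
        exact ⟨-(Nat.fib k : ℤ), by ring⟩
      calc (Nat.fib (k + 1 + j) : ℤ) ^ 4
          ≡ ((Nat.fib (k + 1) : ℤ) * Nat.fib (j + 1)) ^ 4 [ZMOD (Nat.fib j : ℤ)] := step.pow 4
        _ = (Nat.fib (k + 1) : ℤ) ^ 4 * (Nat.fib (j + 1) : ℤ) ^ 4 := by ring
        _ ≡ (Nat.fib (k + 1) : ℤ) ^ 4 * 1 [ZMOD (Nat.fib j : ℤ)] := (Int.ModEq.refl _).mul hA4
        _ = (Nat.fib (k + 1) : ℤ) ^ 4 := by ring
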